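/- arXiv:2407.15737 — 2 statements merged into one kernel-verified Lean document; each statement's English description precedes it below -/
import Mathlib

section
/- Let ε ∈ (0,1], assume max_{j∈J} p_j > 0 (so C > 0), and let β be a partition of J into M (possibly empty) bags such that every bag has size p(B) ≤ 4C. Then for every number of machines m ∈ {1,…,M}: Opt_max(M̂, m) ≤ (1+ε)·Opt_max(β, m) + 4εC. -/
open scoped BigOperators

attribute [local instance] Classical.propDecidable

/-- The load of machine `i` under the assignment `σ` of items (with sizes `sz`) to `m` machines. -/
noncomputable def load {ι : Type*} [Fintype ι] {m : ℕ} (sz : ι → ℝ) (σ : ι → Fin m)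
    (i : Fin m) : ℝ :=
  ∑ b : ι, if σ b = i then sz b else 0

/-- The optimal makespan (minimum over all assignments of the maximum machine load)
for items with sizes `sz` on `m` identical machines. -/
noncomputable def optMax {ι : Type*} [Fintype ι] (sz : ι → ℝ) (m : ℕ) : ℝ :=
  ⨅ σ : ι → Fin m, ⨆ i : Fin m, load sz σ i

/-- The size of bag `b` for the partition `β` of the jobs into bags. -/
noncomputable def bagSize {n : ℕ} {ι : Type*} (p : Fin n → ℝ) (β : Fin n → ι) (b : ι) : ℝ :=
  ∑ j : Fin n, if β j = b then p j else 0

/-- The quantity `C = ∑_{m=1}^M q_m · max (max_j p_j) ((∑_j p_j)/m)`,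
where scenario `i : Fin M` corresponds to `m = i+1` machines. -/
noncomputable def Cval {n M : ℕ} (p : Fin n → ℝ) (q : Fin M → ℝ) : ℝ :=
  ∑ i : Fin M, q i * max (⨆ j : Fin n, p j) ((∑ j : Fin n, p j) / ((i.1 + 1 : ℕ) : ℝ))

/-- A bag `b` of `β` is regular if its size is at least `εC` or it packs a job of size
at least `ε²C`. -/
def Regular {n M : ℕ} (ε C : ℝ) (p : Fin n → ℝ) (β : Fin n → Fin M) (b : Fin M) : Prop :=
  ε * C ≤ bagSize p β b ∨ ∃ j, β j = b ∧ ε ^ 2 * C ≤ p j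

/-- `L = {⌊log_{1+ε}(ε²C)⌋, …, ⌈log_{1+ε}(4C)⌉}`. -/
noncomputable def Lset (ε C : ℝ) : Finset ℤ :=
  Finset.Icc ⌊Real.log (ε ^ 2 * C) / Real.log (1 + ε)⌋ ⌈Real.log (4 * C) / Real.log (1 + ε)⌉

/-- `M̂_ℓ`: the number of regular bags of `β` with size in `[(1+ε)^ℓ, (1+ε)^{ℓ+1})`. -/
noncomputable def Mhat {n M : ℕ} (ε C : ℝ) (p : Fin n → ℝ) (β : Fin n → Fin M) (ℓ : ℤ) : ℕ :=
  (Finset.univ.filter (fun b : Fin M =>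
    Regular ε C p β b ∧ (1 + ε) ^ ℓ ≤ bagSize p β b ∧ bagSize p β b < (1 + ε) ^ (ℓ + 1))).card

/-- `M̂_sand = ⌈(total size of non-regular bags)/(εC)⌉`. -/
noncomputable def Msand {n M : ℕ} (ε C : ℝ) (p : Fin n → ℝ) (β : Fin n → Fin M) : ℕ :=
  ⌈(∑ b : Fin M, if ¬ Regular ε C p β b then bagSize p β b else 0) / (ε * C)⌉₊

/-- Index type for the collection of items consisting of `M̂_ℓ` items for each `ℓ ∈ L`
together with `M̂_sand` sand items. -/
def BagIdx {n M : ℕ} (ε C : ℝ) (p : Fin n → ℝ) (β : Fin n → Fin M) : Type :=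
  (Σ ℓ : (Lset ε C), Fin (Mhat ε C p β ℓ.1)) ⊕ Fin (Msand ε C p β)

noncomputable instance {n M : ℕ} (ε C : ℝ) (p : Fin n → ℝ) (β : Fin n → Fin M) :
    Fintype (BagIdx ε C p β) := by
  unfold BagIdx; infer_instance

/-- The sizes of the items of the guess `M̂`: each of the `M̂_ℓ` items has size `(1+ε)^{ℓ+1}`
and each of the `M̂_sand` items has size `(1+ε)·εC`. -/
noncomputable def itemSz {n M : ℕ} (ε C : ℝ) (p : Fin n → ℝ) (β : Fin n → Fin M) :
    BagIdx ε C p β → ℝ :=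
  Sum.elim (fun x => (1 + ε) ^ ((x.1.1 : ℤ) + 1)) (fun _ => (1 + ε) * ε * C)

/-!
Fix an optimal schedule `σ` of the bags. The items of size `(1+ε)^{ℓ+1}` correspond injectively
to the regular bags with size in `[(1+ε)^ℓ, (1+ε)^{ℓ+1})`; putting each item on the machine of
its bag, the regular items on a machine weigh at most `(1+ε)` times its regular bags. If `S_i` is
the size of the non-regular bags on machine `i`, then `⌈∑ S_i/(εC)⌉ ≤ ∑ ⌈S_i/(εC)⌉`, so the
sand items can be spread with at most `⌈S_i/(εC)⌉` of them on machine `i`, adding at most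
`(1+ε)(S_i + εC)` to it. Every machine then carries at most
`(1+ε)·Opt_max(β,m) + (1+ε)εC ≤ (1+ε)·Opt_max(β,m) + 4εC`.
-/

open Finset

lemma exists_card_fiber_le {α ι : Type*} [Fintype α] [Fintype ι] (c : ι → ℕ)
    (h : Fintype.card α ≤ ∑ i, c i) : ∃ f : α → ι, ∀ i, #{a | f a = i} ≤ c i := by
  obtain ⟨e⟩ := Function.Embedding.nonempty_of_card_le (β := Σ i, Fin (c i)) (by simpa using h)
  refine ⟨fun a => (e a).1, fun i => ?_⟩
  rw [← Fintype.card_subtype, ← Fintype.card_fin (c i)]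
  exact (Fintype.card_le_of_injective
    (fun a : {a // (e a).1 = i} => (⟨e a, a.2⟩ : {s : Σ i, Fin (c i) // s.1 = i}))
    fun a b hab => Subtype.ext (e.injective (congrArg Subtype.val hab))).trans_eq
    (Fintype.card_congr (Equiv.sigmaSubtype i))

section Load

variable {ι : Type*} [Fintype ι] {m : ℕ}

lemma load_nonneg {sz : ι → ℝ} (hsz : ∀ b, 0 ≤ sz b) (σ : ι → Fin m) (i : Fin m) :
    0 ≤ load sz σ i :=
  sum_nonneg fun b _ => ite_nonneg (hsz b) le_rfl

lemma load_add (a b : ι → ℝ) (σ : ι → Fin m) (i : Fin m) :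
    load (a + b) σ i = load a σ i + load b σ i := by
  simp only [load, ← sum_add_distrib, Pi.add_apply, ite_add_ite, add_zero]

lemma load_const_mul (c : ℝ) (a : ι → ℝ) (σ : ι → Fin m) (i : Fin m) :
    load (c • a) σ i = c * load a σ i := by
  simp only [load, mul_sum, Pi.smul_apply, smul_eq_mul, mul_ite, mul_zero]

lemma load_const (s : ℝ) (σ : ι → Fin m) (i : Fin m) :
    load (fun _ => s) σ i = #{b | σ b = i} * s := by
  rw [load, ← sum_filter, sum_const, nsmul_eq_mul]

lemma sum_load (sz : ι → ℝ) (σ : ι → Fin m) : ∑ i, load sz σ i = ∑ b, sz b := by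
  simp only [load]
  rw [sum_comm]
  simp

lemma load_sumElim {κ : Type*} [Fintype κ] (a : ι → ℝ) (b : κ → ℝ) (σ : ι → Fin m)
    (τ : κ → Fin m) (i : Fin m) :
    load (Sum.elim a b) (Sum.elim σ τ) i = load a σ i + load b τ i :=
  Fintype.sum_sum_type _

lemma load_comp_le {κ : Type*} [Fintype κ] {g : ι → κ} (hg : g.Injective) {sz : ι → ℝ}
    {w : κ → ℝ} (hw : ∀ b, 0 ≤ w b) (hsz : ∀ x, sz x ≤ w (g x)) (σ : κ → Fin m) (i : Fin m) :
    load sz (σ ∘ g) i ≤ load w σ i := by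
  calc load sz (σ ∘ g) i = ∑ x, if σ (g x) = i then sz x else 0 := rfl
    _ ≤ ∑ x, if σ (g x) = i then w (g x) else 0 := by
        gcongr with x; split_ifs; exacts [hsz x, le_rfl]
    _ = ∑ b ∈ univ.image g, if σ b = i then w b else 0 :=
        (sum_image (f := fun b => if σ b = i then w b else 0) fun x _ y _ h => hg h).symm
    _ ≤ load w σ i := sum_le_sum_of_subset_of_nonneg (subset_univ _)
        fun b _ _ => ite_nonneg (hw b) le_rfl

lemma optMax_le {sz : ι → ℝ} {t : ℝ} [NeZero m] (σ : ι → Fin m) (h : ∀ i, load sz σ i ≤ t) :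
    optMax sz m ≤ t :=
  (ciInf_le (Set.finite_range _).bddBelow σ).trans (ciSup_le h)

lemma exists_load_le_optMax (sz : ι → ℝ) (m : ℕ) [NeZero m] :
    ∃ σ : ι → Fin m, ∀ i, load sz σ i ≤ optMax sz m := by
  obtain ⟨σ, hσ⟩ := Finite.exists_min fun σ : ι → Fin m => ⨆ i, load sz σ i
  exact ⟨σ, fun i => (le_ciSup (Set.finite_range _).bddAbove i).trans (le_ciInf hσ)⟩

lemma exists_load_const_le {N : ℕ} {s : ℝ} (hs : 0 < s) {L : Fin m → ℝ} (hL : ∀ i, 0 ≤ L i)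
    (hN : N ≤ ⌈(∑ i, L i) / s⌉₊) :
    ∃ f : Fin N → Fin m, ∀ i, load (fun _ => s) f i ≤ L i + s := by
  have hcap : Fintype.card (Fin N) ≤ ∑ i, ⌈L i / s⌉₊ := by
    rw [Fintype.card_fin]
    refine hN.trans (Nat.ceil_le.mpr ?_)
    rw [sum_div, Nat.cast_sum]
    exact sum_le_sum fun i _ => Nat.le_ceil _
  obtain ⟨f, hf⟩ := exists_card_fiber_le _ hcap
  refine ⟨f, fun i => ?_⟩
  calc load (fun _ => s) f i = #{k | f k = i} * s := load_const s f i
    _ ≤ ⌈L i / s⌉₊ * s := by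
        gcongr
        -- the two filters differ only in their decidability instances
        exact (hf i).trans_eq' (by congr)
    _ ≤ (L i / s + 1) * s := by gcongr; exact (Nat.ceil_lt_add_one (div_nonneg (hL i) hs.le)).le
    _ = L i + s := by field_simp

end Load

lemma bagSize_nonneg {n : ℕ} {ι : Type*} {p : Fin n → ℝ} (hp : ∀ j, 0 ≤ p j) (β : Fin n → ι)
    (b : ι) : 0 ≤ bagSize p β b :=
  sum_nonneg fun j _ => ite_nonneg (hp j) le_rfl

lemma iSup_le_Cval {n M : ℕ} (p : Fin n → ℝ) {q : Fin M → ℝ} (hq : ∀ i, 0 ≤ q i)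
    (hq1 : ∑ i, q i = 1) : (⨆ j, p j) ≤ Cval p q :=
  calc (⨆ j, p j) = ∑ i, q i * ⨆ j, p j := by rw [← sum_mul, hq1, one_mul]
    _ ≤ Cval p q := sum_le_sum fun i _ => mul_le_mul_of_nonneg_left (le_max_left _ _) (hq i)

lemma lt_add_one_of_zpow_le_of_lt_zpow {r x : ℝ} (hr : 1 < r) {k l : ℤ} (hk : r ^ k ≤ x)
    (hl : x < r ^ (l + 1)) : k < l + 1 :=
  (zpow_lt_zpow_iff_right₀ hr).mp (hk.trans_lt hl)

section Guess

variable {n M : ℕ} {ε C : ℝ} {p : Fin n → ℝ} {β : Fin n → Fin M}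

/-- `Mhat ε C p β ℓ` is by definition the cardinality of this finset. -/
noncomputable def bucket (ε C : ℝ) (p : Fin n → ℝ) (β : Fin n → Fin M) (ℓ : ℤ) :
    Finset (Fin M) :=
  {b | Regular ε C p β b ∧ (1 + ε) ^ ℓ ≤ bagSize p β b ∧ bagSize p β b < (1 + ε) ^ (ℓ + 1)}

lemma eq_of_mem_bucket (hε : 0 < ε) {b : Fin M} {ℓ ℓ' : ℤ} (h : b ∈ bucket ε C p β ℓ)
    (h' : b ∈ bucket ε C p β ℓ') : ℓ = ℓ' := by
  simp only [bucket, mem_filter, mem_univ, true_and] at h h'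
  have hr : 1 < 1 + ε := by linarith
  have := lt_add_one_of_zpow_le_of_lt_zpow hr h.2.1 h'.2.2
  have := lt_add_one_of_zpow_le_of_lt_zpow hr h'.2.1 h.2.2
  omega

noncomputable def bucketBag (x : Σ ℓ : Lset ε C, Fin (Mhat ε C p β ℓ)) : Fin M :=
  (bucket ε C p β x.1).equivFin.symm x.2

lemma bucketBag_mem (x : Σ ℓ : Lset ε C, Fin (Mhat ε C p β ℓ)) :
    bucketBag x ∈ bucket ε C p β x.1 :=
  Subtype.property _

lemma bucketBag_injective (hε : 0 < ε) :
    (bucketBag : (Σ ℓ : Lset ε C, Fin (Mhat ε C p β ℓ)) → Fin M).Injective := by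
  rintro ⟨ℓ, k⟩ ⟨ℓ', k'⟩ h
  have hmem : bucketBag ⟨ℓ, k⟩ ∈ bucket ε C p β ℓ' := h ▸ bucketBag_mem ⟨ℓ', k'⟩
  obtain rfl : ℓ = ℓ' := Subtype.ext (eq_of_mem_bucket hε (bucketBag_mem _) hmem)
  obtain rfl : k = k' := (bucket ε C p β ℓ).equivFin.symm.injective (Subtype.ext h)
  rfl

lemma zpow_succ_le_mul_bagSize_bucketBag (hε : 0 < ε)
    (x : Σ ℓ : Lset ε C, Fin (Mhat ε C p β ℓ)) :
    (1 + ε) ^ ((x.1.1 : ℤ) + 1) ≤ (1 + ε) * bagSize p β (bucketBag x) := by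
  rw [zpow_add_one₀ (by positivity), mul_comm]
  gcongr
  exact (mem_filter.mp (bucketBag_mem x)).2.2.1

lemma exists_guess_load_le {m : ℕ} (hε : 0 < ε) (hC : 0 < C) (hp : ∀ j, 0 ≤ p j)
    (σ : Fin M → Fin m) : ∃ τ : BagIdx ε C p β → Fin m, ∀ i,
      load (itemSz ε C p β) τ i ≤ (1 + ε) * load (bagSize p β) σ i + (1 + ε) * ε * C := by
  set wR : Fin M → ℝ := fun b => if Regular ε C p β b then bagSize p β b else 0
  set wS : Fin M → ℝ := fun b => if ¬ Regular ε C p β b then bagSize p β b else 0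
  have hsplit : bagSize p β = wR + wS := by
    funext b; by_cases h : Regular ε C p β b <;> simp [wR, wS, h]
  have hwR : ∀ b, 0 ≤ wR b := fun b => ite_nonneg (bagSize_nonneg hp β b) le_rfl
  have hwS : ∀ b, 0 ≤ wS b := fun b => ite_nonneg (bagSize_nonneg hp β b) le_rfl
  have hMsand : Msand ε C p β = ⌈(∑ i, (1 + ε) * load wS σ i) / ((1 + ε) * ε * C)⌉₊ := by
    rw [← mul_sum, sum_load, mul_assoc, mul_div_mul_left _ _ (by positivity)]
    rfl
  obtain ⟨f, hf⟩ := exists_load_const_le (N := Msand ε C p β) (L := fun i => (1 + ε) * load wS σ i)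
    (by positivity) (fun i => mul_nonneg (by positivity) (load_nonneg hwS σ i)) hMsand.le
  refine ⟨Sum.elim (σ ∘ bucketBag) f, fun i => ?_⟩
  have hreg : load (fun x : Σ ℓ : Lset ε C, Fin (Mhat ε C p β ℓ) => (1 + ε) ^ ((x.1.1 : ℤ) + 1))
      (σ ∘ bucketBag) i ≤ load ((1 + ε) • wR) σ i := by
    refine load_comp_le (bucketBag_injective hε) (fun b => mul_nonneg (by positivity) (hwR b))
      (fun x => ?_) σ i
    simpa [wR, (mem_filter.mp (bucketBag_mem x)).2.1] using zpow_succ_le_mul_bagSize_bucketBag hε x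
  calc load (itemSz ε C p β) (Sum.elim (σ ∘ bucketBag) f) i
      = load (fun x : Σ ℓ : Lset ε C, Fin (Mhat ε C p β ℓ) => (1 + ε) ^ ((x.1.1 : ℤ) + 1))
          (σ ∘ bucketBag) i + load (fun _ => (1 + ε) * ε * C) f i := load_sumElim _ _ _ _ i
    _ ≤ (1 + ε) * load wR σ i + ((1 + ε) * load wS σ i + (1 + ε) * ε * C) :=
        add_le_add (hreg.trans_eq (load_const_mul _ _ _ _)) (hf i)
    _ = (1 + ε) * load (bagSize p β) σ i + (1 + ε) * ε * C := by rw [hsplit, load_add]; ring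

end Guess

theorem stmt3_general (n M : ℕ) (ε : ℝ) (hε0 : 0 < ε) (hε1 : ε ≤ 1)
    (p : Fin n → ℝ) (hp : ∀ j, 0 ≤ p j) (hpmax : 0 < ⨆ j : Fin n, p j)
    (q : Fin M → ℝ) (hq : ∀ i, 0 ≤ q i) (hq1 : ∑ i, q i = 1)
    (β : Fin n → Fin M) :
    ∀ m : ℕ, 1 ≤ m → m ≤ M →
      optMax (itemSz ε (Cval p q) p β) m ≤
        (1 + ε) * optMax (bagSize p β) m + 4 * ε * Cval p q := by
  intro m hm _
  have : NeZero m := ⟨by omega⟩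
  have hC : 0 < Cval p q := hpmax.trans_le (iSup_le_Cval p hq hq1)
  obtain ⟨σ, hσ⟩ := exists_load_le_optMax (bagSize p β) m
  obtain ⟨τ, hτ⟩ := exists_guess_load_le (β := β) hε0 hC hp σ
  refine optMax_le τ fun i => (hτ i).trans ?_
  nlinarith [hσ i, mul_pos hε0 hC]

/-- for every `m ∈ {1,…,M}`,
`Opt_max(M̂, m) ≤ (1+ε)·Opt_max(β, m) + 4εC`. -/
theorem stmt3 (n M : ℕ) (hM : 1 ≤ M) (ε : ℝ) (hε0 : 0 < ε) (hε1 : ε ≤ 1)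
    (p : Fin n → ℝ) (hp : ∀ j, 0 ≤ p j) (hpmax : 0 < ⨆ j : Fin n, p j)
    (q : Fin M → ℝ) (hq : ∀ i, 0 ≤ q i) (hq1 : ∑ i, q i = 1)
    (β : Fin n → Fin M) (hβ : ∀ b, bagSize p β b ≤ 4 * Cval p q) :
    ∀ m : ℕ, 1 ≤ m → m ≤ M →
      optMax (itemSz ε (Cval p q) p β) m ≤
        (1 + ε) * optMax (bagSize p β) m + 4 * ε * Cval p q :=
  stmt3_general n M ε hε0 hε1 p hp hpmax q hq hq1 β
end

section
/- Let β be a partition of a finite job set into bags with sizes p(B) ≥ 0, let m ≥ 1 be an integer, and let S be a set of bags of β with |S| < m such that p(B) ≥ Opt_min(β, m) for every B ∈ S. Then Opt_min(β, m) = min{ min_{B∈S} p(B) , Opt_min(β∖S, m−|S|) }, where Opt_min(β∖S, m−|S|) is the optimal minimum machine load obtained by scheduling only the bags of β not in S on m−|S| machines (and min_{B∈S} p(B) := +∞ if S is empty). -/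
open scoped BigOperators

attribute [local instance] Classical.propDecidable

/-- `Opt_min`: the maximum over all assignments of items (with sizes `sz`) to `m` identical
machines of the minimum machine load. -/
noncomputable def optMin {ι : Type*} [Fintype ι] (sz : ι → ℝ) (m : ℕ) : ℝ :=
  ⨆ σ : ι → Fin m, ⨅ i : Fin m, load sz σ i

/-! A schedule for `β` restricts to one for `β ∖ S` on the `m - |S|` machines that carry no bag
of `S`; the other machines are merged into these, which only raises their loads. Conversely, a
schedule for `β ∖ S` on `m - |S|` machines extends to `β` by giving every bag of `S` a private
machine, so its minimum load drops at most to `min_{B ∈ S} p(B)`. With `p(B) ≥ Opt_min(β, m)` on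
`S`, the two inequalities combine to the identity. -/

section Load

variable {ι : Type*} [Fintype ι] {m : ℕ} (sz : ι → ℝ)

lemma iInf_load_le (σ : ι → Fin m) (i : Fin m) : ⨅ i, load sz σ i ≤ load sz σ i :=
  ciInf_le (Finite.bddBelow_range _) i

lemma iInf_load_le_optMin (σ : ι → Fin m) : ⨅ i, load sz σ i ≤ optMin sz m :=
  le_ciSup (f := fun σ : ι → Fin m => ⨅ i, load sz σ i) (Finite.bddAbove_range _) σ

lemma exists_optMin_eq (hm : 0 < m) : ∃ σ : ι → Fin m, optMin sz m = ⨅ i, load sz σ i := by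
  have : Nonempty (Fin m) := ⟨⟨0, hm⟩⟩
  obtain ⟨σ, hσ⟩ := exists_eq_ciSup_of_finite (f := fun σ : ι → Fin m => ⨅ i, load sz σ i)
  exact ⟨σ, hσ.symm⟩

variable {sz}

lemma le_load_of_eq (hsz : ∀ b, 0 ≤ sz b) {σ : ι → Fin m} {b : ι} {i : Fin m} (hb : σ b = i) :
    sz b ≤ load sz σ i := by
  have hnonneg : ∀ c ∈ Finset.univ, 0 ≤ if σ c = i then sz c else 0 := fun c _ => by
    split_ifs
    exacts [hsz c, le_rfl]
  simpa [load, hb] using Finset.single_le_sum hnonneg (Finset.mem_univ b)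

lemma load_le_load_comp (hsz : ∀ b, 0 ≤ sz b) {k : ℕ} (f : Fin m → Fin k) (σ : ι → Fin m)
    (i : Fin m) : load sz σ i ≤ load sz (f ∘ σ) (f i) := by
  refine Finset.sum_le_sum fun b _ => ?_
  by_cases hb : σ b = i
  · simp [hb]
  · rw [if_neg hb]
    split_ifs
    exacts [hsz b, le_rfl]

lemma load_subtype {p : ι → Prop} [DecidablePred p] (σ : ι → Fin m) {i : Fin m}
    (hp : ∀ b, σ b = i → p b) :
    load (fun b : Subtype p => sz b) (fun b => σ b) i = load sz σ i := by
  unfold load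
  rw [← Finset.sum_subtype (Finset.univ.filter p) (by simp)
    (fun b => if σ b = i then sz b else 0)]
  refine Finset.sum_filter_of_ne fun b _ hb => hp b ?_
  by_contra h
  exact hb (if_neg h)

end Load

section Decoupling

variable {ι : Type*} [Fintype ι] [DecidableEq ι] {sz : ι → ℝ} (hsz : ∀ b, 0 ≤ sz b) (S : Finset ι)
include hsz

lemma optMin_le_optMin_compl {m : ℕ} (hS : S.card < m) :
    optMin sz m ≤ optMin (fun b : {b // b ∉ S} => sz b) (m - S.card) := by
  have : Nonempty (Fin m) := ⟨⟨0, by omega⟩⟩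
  have : Nonempty (Fin (m - S.card)) := ⟨⟨0, by omega⟩⟩
  refine ciSup_le fun σ => ?_
  obtain ⟨v⟩ : Nonempty (Fin (m - S.card) ↪ {i // i ∈ (S.image σ)ᶜ}) := by
    refine Function.Embedding.nonempty_of_card_le ?_
    rw [Fintype.card_fin, Fintype.card_coe, Finset.card_compl, Fintype.card_fin]
    exact Nat.sub_le_sub_left Finset.card_image_le m
  let u : Fin (m - S.card) ↪ Fin m := v.trans (Function.Embedding.subtype _)
  obtain ⟨r, hr⟩ : ∃ r : Fin m → Fin (m - S.card), Function.LeftInverse r u :=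
    ⟨_, Function.leftInverse_invFun u.injective⟩
  have hfreeS : ∀ j b, σ b = u j → b ∉ S := fun j b hb hbS =>
    Finset.mem_compl.1 (v j).2 (hb ▸ Finset.mem_image_of_mem σ hbS :)
  refine (le_ciInf fun j => ?_).trans (iInf_load_le_optMin _ (r ∘ fun b : {b // b ∉ S} => σ b))
  calc ⨅ i, load sz σ i ≤ load sz σ (u j) := iInf_load_le sz σ (u j)
    _ = load (fun b : {b // b ∉ S} => sz b) (fun b => σ b) (u j) :=
        (load_subtype σ (hfreeS j)).symm
    _ ≤ load (fun b : {b // b ∉ S} => sz b) (r ∘ fun b => σ b) (r (u j)) :=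
        load_le_load_comp (fun b : {b // b ∉ S} => hsz b) r _ _
    _ = _ := by rw [hr j]

lemma le_optMin_add_card {k : ℕ} (hk : 0 < k) {w : ℝ} (hwS : ∀ b ∈ S, w ≤ sz b)
    (hw : w ≤ optMin (fun b : {b // b ∉ S} => sz b) k) : w ≤ optMin sz (k + S.card) := by
  obtain ⟨τ, hτ⟩ := exists_optMin_eq (fun b : {b // b ∉ S} => sz b) hk
  let σ : ι → Fin (k + S.card) := fun b =>
    if h : b ∈ S then Fin.natAdd k (S.equivFin ⟨b, h⟩) else Fin.castAdd S.card (τ ⟨b, h⟩)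
  have : Nonempty (Fin (k + S.card)) := ⟨⟨0, by omega⟩⟩
  refine le_trans (le_ciInf fun i => ?_) (iInf_load_le_optMin sz σ)
  induction i using Fin.addCases with
  | left j =>
    have hσ : (fun b : {b // b ∉ S} => σ b) = Fin.castAdd S.card ∘ τ := by
      funext b
      simp [σ, b.2]
    have hnotS : ∀ b, σ b = Fin.castAdd S.card j → b ∉ S := fun b hb hbS => by
      simp [σ, hbS, Fin.ext_iff] at hb
      omega
    calc w ≤ load (fun b : {b // b ∉ S} => sz b) τ j := (hτ ▸ hw).trans (iInf_load_le _ τ j)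
      _ ≤ load (fun b : {b // b ∉ S} => sz b) (fun b => σ b) (Fin.castAdd S.card j) :=
          by rw [hσ]; exact load_le_load_comp (fun b : {b // b ∉ S} => hsz b) _ τ j
      _ = load sz σ (Fin.castAdd S.card j) := load_subtype σ hnotS
  | right t =>
    have hσ : σ (S.equivFin.symm t) = Fin.natAdd k t := by simp [σ]
    exact (hwS _ (S.equivFin.symm t).2).trans (le_load_of_eq hsz hσ)

end Decoupling

theorem stmt14_general (Mb : ℕ) (sz : Fin Mb → ℝ) (hsz : ∀ B, 0 ≤ sz B)
    (m : ℕ) (S : Finset (Fin Mb)) (hScard : S.card < m)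
    (hS : ∀ B ∈ S, optMin sz m ≤ sz B) :
    optMin sz m =
      if hne : S.Nonempty then
        min (S.inf' hne sz)
          (optMin (fun B : {B : Fin Mb // B ∉ S} => sz B.1) (m - S.card))
      else
        optMin (fun B : {B : Fin Mb // B ∉ S} => sz B.1) (m - S.card) := by
  have hle := optMin_le_optMin_compl hsz S hScard
  have hge : ∀ w, (∀ B ∈ S, w ≤ sz B) →
      w ≤ optMin (fun B : {B // B ∉ S} => sz B) (m - S.card) → w ≤ optMin sz m := by
    intro w hwS hw
    have := le_optMin_add_card hsz S (Nat.sub_pos_of_lt hScard) hwS hw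
    rwa [Nat.sub_add_cancel hScard.le] at this
  split_ifs with hne
  · exact le_antisymm (le_min (Finset.le_inf' hne _ hS) hle)
      (hge _ (fun B hB => (min_le_left _ _).trans (Finset.inf'_le sz hB)) (min_le_right _ _))
  · exact le_antisymm hle (hge _ (fun B hB => absurd ⟨B, hB⟩ hne) le_rfl)

/-- decoupling identity.  If every bag of `S` has size at least
`Opt_min(β, m)` and `|S| < m`, then
`Opt_min(β, m) = min (min_{B∈S} p(B)) (Opt_min(β∖S, m−|S|))`, where the first term is
omitted (i.e., taken to be `+∞`) when `S` is empty. -/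
theorem stmt14 (Mb : ℕ) (sz : Fin Mb → ℝ) (hsz : ∀ B, 0 ≤ sz B)
    (m : ℕ) (hm : 0 < m) (S : Finset (Fin Mb)) (hScard : S.card < m)
    (hS : ∀ B ∈ S, optMin sz m ≤ sz B) :
    optMin sz m =
      if hne : S.Nonempty then
        min (S.inf' hne sz)
          (optMin (fun B : {B : Fin Mb // B ∉ S} => sz B.1) (m - S.card))
      else
        optMin (fun B : {B : Fin Mb // B ∉ S} => sz B.1) (m - S.card) :=
  stmt14_general Mb sz hsz m S hScard hS
end
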